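/- arXiv:0711.1362 — 2 statements merged into one kernel-verified Lean document; each statement's English description precedes it below -/
import Mathlib

section
/- Suppose a Polish group G acts continuously on Polish spaces Y and Z, and X ⊆ Y × Z is a closed subset invariant under the diagonal action g·(y,z) = (g·y, g·z). Suppose there is (y₀, z₀) ∈ X with orbit G·(y₀,z₀) comeagre in X and G·y₀ comeagre in Y. Then for comeagrely many y ∈ Y, for comeagrely many z in the section X_y = {z : (y,z) ∈ X}, the orbit G·(y,z) is comeagre in X. -/
/-!
Write `O` for the orbit of `(y₀, z₀)`. For `(y, z) ∈ O` the orbit of `(y, z)` is `O` itself, so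
it suffices to show that for `y = g • y₀` the `z` in the section `X_y` with `(y, z) ∉ O` form a
meagre set. We argue for any Polish `G`-space `P` over `Y` (an equivariant `π : P → Y`; here
`P = X` and `π = Prod.fst`); replacing `p₀` by `g • p₀`, which has the same orbit, we may take
`y = y₀ = π p₀`.

Cover `P \ O` by countably many closed nowhere dense sets `F`. If the fibre `π⁻¹ y₀` met `P \ O`
in a non-meagre set, then for every `g` there would be an `F` and a basic open `U` with
`∅ ≠ g • π⁻¹ y₀ ∩ U ⊆ F`. By the Baire category theorem in `G`, one pair `(F, U)` works for all
`g` in a nonempty open `V`, so `π⁻¹ (V • y₀) ∩ U ⊆ F`. But `V • y₀` is analytic, so it has the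
Baire property, and it is non-meagre because `G • y₀` is comeagre. Pulling back along the orbit
map `g ↦ g • p₀`, which reflects meagre sets because `O` is comeagre, shows that
`π⁻¹ (V • y₀) ∩ U` is not meagre, a contradiction.
-/

open Set Filter Topology TopologicalSpace MulAction MeasureTheory Pointwise

section Residual

variable {α : Type*} [TopologicalSpace α]

theorem isMeagre_diff_of_residualEq {s t : Set α} (h : s =ᶠ[residual α] t) :
    IsMeagre (s \ t) := by
  filter_upwards [h.mem_iff] with x hx hxst
  exact hxst.2 (hx.1 hxst.1)

theorem residualEq_of_isMeagre_diff {s t : Set α} (hst : IsMeagre (s \ t))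
    (hts : IsMeagre (t \ s)) : s =ᶠ[residual α] t := by
  refine eventuallyEq_set.2 ?_
  filter_upwards [hst, hts] with x hst hts
  simp only [mem_compl_iff, Set.mem_sdiff, not_and, not_not] at hst hts
  exact ⟨hst, hts⟩

theorem nonempty_inter_interior_of_not_isMeagre {s t : Set α} (ht : IsClosed t)
    (h : ¬IsMeagre (s ∩ t)) : (s ∩ interior t).Nonempty := by
  have hfrontier : IsMeagre (frontier t) :=
    (isClosed_frontier.isNowhereDense_iff.2 (interior_frontier ht)).isMeagre
  refine nonempty_of_not_isMeagre fun hmeagre => h ((hmeagre.union hfrontier).mono ?_)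
  rintro x ⟨hxs, hxt⟩
  by_cases hx : x ∈ interior t
  · exact Or.inl ⟨hxs, hx⟩
  · exact Or.inr (ht.frontier_eq ▸ ⟨hxt, hx⟩)

theorem IsClosed.baireMeasurableSet {s : Set α} (hs : IsClosed s) : BaireMeasurableSet s :=
  hs.isOpen_compl.baireMeasurableSet.of_compl

end Residual

section NonMeagreLocus

variable {α : Type*} [TopologicalSpace α]

-- Kuratowski's `D(s)`.
def nonMeagreLocus (s : Set α) : Set α :=
  {x | ∀ u ∈ 𝓝 x, ¬IsMeagre (s ∩ u)}

theorem isClosed_nonMeagreLocus (s : Set α) : IsClosed (nonMeagreLocus s) := by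
  refine isOpen_compl_iff.mp (isOpen_iff_mem_nhds.mpr fun x hx => ?_)
  simp only [nonMeagreLocus, mem_compl_iff, mem_ofPred_eq, not_forall, not_not] at hx
  obtain ⟨u, hu, hmeagre⟩ := hx
  filter_upwards [eventually_mem_nhds_iff.2 hu] with y hy
  exact fun h => h u hy hmeagre

theorem nonMeagreLocus_mono {s t : Set α} (h : s ⊆ t) : nonMeagreLocus s ⊆ nonMeagreLocus t :=
  fun _ hx u hu hmeagre => hx u hu (hmeagre.mono (inter_subset_inter_left u h))

theorem nonMeagreLocus_subset_closure (s : Set α) : nonMeagreLocus s ⊆ closure s :=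
  fun _ hx => mem_closure_iff_nhds.mpr fun u hu =>
    inter_comm s u ▸ nonempty_of_not_isMeagre (hx u hu)

variable [SecondCountableTopology α]

theorem isMeagre_diff_nonMeagreLocus (s : Set α) : IsMeagre (s \ nonMeagreLocus s) := by
  have hcover :
      s \ nonMeagreLocus s ⊆ ⋃ u ∈ {u ∈ countableBasis α | IsMeagre (s ∩ u)}, s ∩ u := by
    rintro x ⟨hxs, hx⟩
    simp only [nonMeagreLocus, mem_ofPred_eq, not_forall, not_not] at hx
    obtain ⟨u, hu, hmeagre⟩ := hx
    obtain ⟨b, hb, hxb, hbu⟩ := (isBasis_countableBasis α).mem_nhds_iff.mp hu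
    exact mem_biUnion ⟨hb, hmeagre.mono (inter_subset_inter_right s hbu)⟩ ⟨hxs, hxb⟩
  exact (isMeagre_biUnion ((countable_countableBasis α).mono (sep_subset _ _))
    fun u hu => hu.2).mono hcover

theorem not_isMeagre_inter_nonMeagreLocus {s : Set α} (h : ¬IsMeagre s) :
    ¬IsMeagre (s ∩ nonMeagreLocus s) := fun hmeagre =>
  h ((hmeagre.union (isMeagre_diff_nonMeagreLocus s)).mono (inter_union_sdiff s _).superset)

theorem isMeagre_nonMeagreLocus_diff_iUnion {ι : Type*} [Countable ι] {s : Set α}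
    {t : ι → Set α} (hst : s ⊆ ⋃ i, t i) :
    IsMeagre (nonMeagreLocus s \ ⋃ i, nonMeagreLocus (t i)) := by
  set D := nonMeagreLocus s \ ⋃ i, nonMeagreLocus (t i)
  have hD : BaireMeasurableSet D := (isClosed_nonMeagreLocus s).baireMeasurableSet.diff
    (.iUnion fun i => (isClosed_nonMeagreLocus (t i)).baireMeasurableSet)
  by_contra hDm
  obtain ⟨u, hu, hDu⟩ := hD.residualEq_isOpen
  obtain ⟨x, hxD, hxu⟩ : (D ∩ u).Nonempty := nonempty_of_not_isMeagre fun h =>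
    hDm ((h.union (isMeagre_diff_of_residualEq hDu)).mono (inter_union_sdiff D u).superset)
  obtain ⟨i, hi⟩ : ∃ i, ¬IsMeagre (t i ∩ u) := by
    by_contra! h
    refine hxD.1 u (hu.mem_nhds hxu) ((isMeagre_iUnion h).mono ?_)
    rw [← iUnion_inter]
    exact inter_subset_inter_left u hst
  refine not_isMeagre_inter_nonMeagreLocus hi ((isMeagre_diff_of_residualEq hDu.symm).mono ?_)
  rintro y ⟨⟨-, hyu⟩, hy⟩
  exact ⟨hyu, fun hyD => hyD.2 (mem_iUnion_of_mem i (nonMeagreLocus_mono inter_subset_left hy))⟩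

end NonMeagreLocus

section AnalyticSet

open PiNat

variable {α : Type*}

-- `res x n` lists `x 0, …, x (n - 1)` in reverse order, so `n :: s` extends the prefix `s`.
def prefixImage (f : (ℕ → ℕ) → α) (s : List ℕ) : Set α :=
  f '' {x | res x s.length = s}

theorem prefixImage_nil (f : (ℕ → ℕ) → α) : prefixImage f [] = range f := by
  simp [prefixImage]

theorem prefixImage_subset_iUnion (f : (ℕ → ℕ) → α) (s : List ℕ) :
    prefixImage f s ⊆ ⋃ n, prefixImage f (n :: s) := by
  rintro _ ⟨x, hx, rfl⟩
  exact mem_iUnion.2 ⟨x s.length, x, by simpa [res_succ] using hx, rfl⟩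

theorem prefixImage_res (f : (ℕ → ℕ) → α) (σ : ℕ → ℕ) (k : ℕ) :
    prefixImage f (res σ k) = f '' cylinder σ k := by
  rw [prefixImage, res_length, cylinder_eq_res]

variable [TopologicalSpace α]

theorem mem_range_of_forall_exists_cons [T2Space α] {f : (ℕ → ℕ) → α} (hf : Continuous f)
    {K : List ℕ → Set α} (hK : ∀ s, K s ⊆ closure (prefixImage f s)) {x : α} (hx : x ∈ K [])
    (hstep : ∀ s, x ∈ K s → ∃ n, x ∈ K (n :: s)) : x ∈ range f := by
  choose! next hnext using hstep
  let pre : ℕ → List ℕ := fun k => Nat.rec [] (fun _ s => next s :: s) k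
  let σ : ℕ → ℕ := fun k => next (pre k)
  have hpre (k : ℕ) : pre k = res σ k := by
    induction k with
    | zero => rfl
    | succ k ih => rw [res_succ, ← ih]
  have hmem (k : ℕ) : x ∈ K (pre k) := by
    induction k with
    | zero => exact hx
    | succ k ih => exact hnext _ ih
  by_contra hxf
  obtain ⟨U, W, hU, hW, hxU, hσW, hUW⟩ := t2_separation fun h => hxf ⟨σ, h.symm⟩
  obtain ⟨_, ⟨τ, k, rfl⟩, hστ, hτW⟩ := (isTopologicalBasis_cylinders fun _ => ℕ)
    |>.exists_subset_of_mem_open (mem_preimage.2 hσW) (hW.preimage hf)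
  have hxW : x ∈ closure W := by
    refine closure_mono ?_ (hK _ (hmem k))
    rw [hpre, prefixImage_res, mem_cylinder_iff_eq.1 hστ]
    exact image_subset_iff.2 hτW
  exact disjoint_left.1 (hUW.closure_right hU) hxU hxW

variable [T2Space α] [SecondCountableTopology α]

/- `D(range f)` differs from `range f` by a meagre set: off the meagre union of the sets
`D(prefixImage f s) \ ⋃ n, D(prefixImage f (n :: s))`, a point of `D(range f)` follows a branch
of the scheme `s ↦ D(prefixImage f s)`, hence lies in the range. -/
theorem MeasureTheory.AnalyticSet.baireMeasurableSet {s : Set α} (hs : AnalyticSet s) :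
    BaireMeasurableSet s := by
  rw [AnalyticSet] at hs
  obtain rfl | ⟨f, hf, rfl⟩ := hs
  · exact isOpen_empty.baireMeasurableSet
  set K : List ℕ → Set α := fun s => nonMeagreLocus (prefixImage f s)
  have hE : IsMeagre (⋃ s, K s \ ⋃ n, K (n :: s)) :=
    isMeagre_iUnion fun s => isMeagre_nonMeagreLocus_diff_iUnion (prefixImage_subset_iUnion f s)
  refine (isClosed_nonMeagreLocus (range f)).baireMeasurableSet.congr
    (residualEq_of_isMeagre_diff (hE.mono fun x ⟨hx, hxf⟩ => ?_)
      (isMeagre_diff_nonMeagreLocus _))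
  by_contra hxE
  refine hxf (mem_range_of_forall_exists_cons hf (fun s => nonMeagreLocus_subset_closure _)
    (by rwa [← prefixImage_nil] at hx) fun s hs => ?_)
  by_contra! hn
  exact hxE (mem_iUnion_of_mem s ⟨hs, by simpa using hn⟩)

end AnalyticSet

section Orbit

variable {G α : Type*} [Group G] [TopologicalSpace G] [ContinuousMul G]
  [SecondCountableTopology G] [TopologicalSpace α] [BaireSpace α] [MulAction G α]
  [ContinuousSMul G α] {x : α}

-- Countably many translates of `V` cover `G`, so countably many translates of `V • x` cover
-- the orbit of `x`.
theorem not_isMeagre_image_smul (hx : orbit G x ∈ residual α) {V : Set G} (hV : IsOpen V)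
    (hVne : V.Nonempty) : ¬IsMeagre ((· • x) '' V) := by
  intro hmeagre
  obtain ⟨v, hv⟩ := hVne
  obtain ⟨T, hT, hTV⟩ := isOpen_iUnion_countable (fun g : G => g • V) fun g => hV.smul g
  have : Nonempty α := ⟨x⟩
  refine not_isMeagre_of_mem_residual hx ((isMeagre_biUnion hT fun g _ =>
    (Homeomorph.smul g).isInducing.isMeagre_image hmeagre).mono ?_)
  rintro _ ⟨h, rfl⟩
  have hh : h ∈ ⋃ g ∈ T, g • V :=
    hTV ▸ mem_iUnion.2 ⟨h * v⁻¹, v, hv, inv_mul_cancel_right h v⟩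
  obtain ⟨g, hg, w, hw, rfl⟩ := mem_iUnion₂.1 hh
  exact mem_biUnion hg ⟨w • x, ⟨w, hw, rfl⟩, (smul_assoc g w x).symm⟩

theorem IsMeagre.preimage_smul (hx : orbit G x ∈ residual α) {s : Set α} (hs : IsMeagre s) :
    IsMeagre ((fun g : G => g • x) ⁻¹' s) := by
  suffices Tendsto (fun g : G => g • x) (residual G) (residual α) from this hs
  refine le_countableGenerate_iff_of_countableInterFilter.mpr fun t ⟨ht, htd⟩ =>
    residual_of_dense_open (ht.preimage (continuous_id.smul continuous_const))
      (dense_iff_inter_open.2 fun V hV hVne => ?_)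
  by_contra hVt
  refine not_isMeagre_image_smul hx hV hVne <| IsNowhereDense.isMeagre <|
    (isClosed_isNowhereDense_iff_compl.2 ⟨by rwa [compl_compl], by rwa [compl_compl]⟩).2.mono ?_
  rintro _ ⟨g, hg, rfl⟩ hgt
  exact hVt ⟨g, hg, hgt⟩

end Orbit

theorem exists_mem_countableBasis_of_not_isMeagre {P : Type*} [TopologicalSpace P]
    [SecondCountableTopology P] {S : Set (Set P)} (hS : S.Countable) {Φ : Set P} {M : Set Φ}
    (hM : ¬IsMeagre M) (e : P ≃ₜ P) (hMS : ∀ p ∈ M, e p ∈ ⋃₀ S) :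
    ∃ F ∈ S, ∃ U ∈ countableBasis P,
      (∃ p ∈ Φ, e p ∈ U) ∧ ∀ p ∈ Φ, e p ∈ U → e p ∈ closure F := by
  obtain ⟨F, hF, hMF⟩ : ∃ F ∈ S, ¬IsMeagre {p : Φ | e p ∈ closure F} := by
    by_contra! h
    refine hM ((isMeagre_biUnion hS h).mono fun p hp => ?_)
    obtain ⟨F, hF, hpF⟩ := mem_sUnion.mp (hMS p hp)
    exact mem_biUnion hF (subset_closure hpF)
  set E := {p : Φ | e p ∈ closure F}
  have hE : IsClosed E := isClosed_closure.preimage (e.continuous.comp continuous_subtype_val)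
  obtain ⟨⟨p, hpΦ⟩, -, hp⟩ := nonempty_inter_interior_of_not_isMeagre hE (by rwa [univ_inter])
  obtain ⟨W, hW, hWE⟩ := isOpen_induced_iff.mp (isOpen_interior (s := E))
  have hpW : (⟨p, hpΦ⟩ : Φ) ∈ Subtype.val ⁻¹' W := hWE ▸ hp
  obtain ⟨U, hU, hpU, hUW⟩ := (isBasis_countableBasis P).exists_subset_of_mem_open
    (mem_image_of_mem e hpW) (e.isOpenMap W hW)
  refine ⟨F, hF, U, hU, ⟨p, hpΦ, hpU⟩, fun q hqΦ hqU => ?_⟩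
  obtain ⟨w, hw, hwq⟩ := hUW hqU
  have hqW : (⟨q, hqΦ⟩ : Φ) ∈ Subtype.val ⁻¹' W := e.injective hwq ▸ hw
  exact interior_subset (s := E) (hWE ▸ hqW)

section Fibre

variable {G P Y : Type*} [Group G] [TopologicalSpace G] [ContinuousMul G] [PolishSpace G]
  [TopologicalSpace P] [PolishSpace P] [MulAction G P] [ContinuousSMul G P]
  [TopologicalSpace Y] [PolishSpace Y] [MulAction G Y] [ContinuousSMul G Y]
  {π : P → Y} {p₀ : P}

theorem not_isMeagre_preimage_image_smul_inter (hπc : Continuous π)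
    (hπ : ∀ (g : G) p, π (g • p) = g • π p) (hp₀ : orbit G p₀ ∈ residual P)
    (hy₀ : orbit G (π p₀) ∈ residual Y) {V : Set G} (hV : IsOpen V) (hVne : V.Nonempty)
    {U : Set P} (hU : IsOpen U) (hVU : ∀ g ∈ V, ∃ p, π p = π p₀ ∧ g • p ∈ U) :
    ¬IsMeagre (π ⁻¹' ((· • π p₀) '' V) ∩ U) := by
  set y₀ := π p₀
  obtain ⟨A, hA, hVA⟩ := (hV.analyticSet_image (f := (· • y₀))
    (continuous_id.smul continuous_const)).baireMeasurableSet.residualEq_isOpen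
  obtain ⟨_, ⟨v, hv, rfl⟩, hvA⟩ : ((· • y₀) '' V ∩ A).Nonempty :=
    nonempty_of_not_isMeagre fun h => not_isMeagre_image_smul hy₀ hV hVne
      ((h.union (isMeagre_diff_of_residualEq hVA)).mono (inter_union_sdiff _ _).superset)
  obtain ⟨p, hp, hpU⟩ := hVU v hv
  have hΩ : IsOpen (π ⁻¹' A ∩ U) := (hA.preimage hπc).inter hU
  obtain ⟨_, hgΩ, g, rfl⟩ := (dense_of_mem_residual hp₀).inter_open_nonempty _ hΩ
    ⟨v • p, by simpa [hπ, hp] using hvA, hpU⟩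
  intro hmeagre
  refine not_isMeagre_of_isOpen (hΩ.preimage (continuous_id.smul continuous_const)) ⟨g, hgΩ⟩
    (((IsMeagre.preimage_smul hp₀ hmeagre).union
      (IsMeagre.preimage_smul hy₀ (isMeagre_diff_of_residualEq hVA.symm))).mono ?_)
  rintro h ⟨hhA, hhU⟩
  by_cases hh : h • y₀ ∈ (· • y₀) '' V
  · exact Or.inl ⟨by simpa [hπ] using hh, hhU⟩
  · exact Or.inr ⟨by simpa [hπ] using hhA, hh⟩

theorem isMeagre_fibre_notMem_orbit (hπc : Continuous π)
    (hπ : ∀ (g : G) p, π (g • p) = g • π p) (hp₀ : orbit G p₀ ∈ residual P)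
    (hy₀ : orbit G (π p₀) ∈ residual Y) :
    IsMeagre {p : {p : P // π p = π p₀} | (p : P) ∉ orbit G p₀} := by
  set Φ := {p : P | π p = π p₀}
  obtain ⟨S, hSnd, hSc, hSO⟩ := isMeagre_iff_countable_union_isNowhereDense.mp
    (show IsMeagre (orbit G p₀)ᶜ by rwa [IsMeagre, compl_compl])
  set T : Set P × Set P → Set G := fun FU =>
    {g | ∃ p ∈ Φ, g • p ∈ FU.2} ∩ {g | ∀ p ∈ Φ, g • p ∈ FU.2 → g • p ∈ closure FU.1}
  by_contra hM
  have hcover (g : G) : g ∈ ⋃ FU ∈ S ×ˢ countableBasis P, T FU := by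
    obtain ⟨F, hF, U, hU, hgFU⟩ := exists_mem_countableBasis_of_not_isMeagre hSc hM
      (Homeomorph.smul g) fun p hp => hSO (by
        rwa [mem_compl_iff, Homeomorph.smul_apply, mem_orbit_symm, orbit_smul, mem_orbit_symm])
    exact mem_iUnion₂.2 ⟨(F, U), ⟨hF, hU⟩, hgFU⟩
  obtain ⟨⟨F, U⟩, ⟨hF, hU⟩, hT⟩ :=
    exists_of_not_isMeagre_biUnion (hSc.prod (countable_countableBasis P)) (A := T) fun h =>
      not_isMeagre_of_isOpen isOpen_univ univ_nonempty (h.mono fun g _ => hcover g)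
  have hUo := isOpen_of_mem_countableBasis hU
  have hsmul (p : P) : Continuous fun g : G => g • p := continuous_id.smul continuous_const
  have hA : IsOpen {g : G | ∃ p ∈ Φ, g • p ∈ U} := by
    have hA' : {g : G | ∃ p ∈ Φ, g • p ∈ U} = ⋃ p ∈ Φ, (· • p) ⁻¹' U := by ext; simp
    exact hA' ▸ isOpen_biUnion fun p _ => hUo.preimage (hsmul p)
  have hC : IsClosed {g : G | ∀ p ∈ Φ, g • p ∈ U → g • p ∈ closure F} := by
    simpa only [ofPred_forall] using isClosed_biInter fun p _ =>
      isClosed_imp (hUo.preimage (hsmul p)) (isClosed_closure.preimage (hsmul p))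
  refine not_isMeagre_preimage_image_smul_inter hπc hπ hp₀ hy₀ (hA.inter isOpen_interior)
    (nonempty_inter_interior_of_not_isMeagre hC hT) hUo (fun g hg => hg.1)
    ((hSnd F hF).closure.isMeagre.mono ?_)
  rintro q ⟨⟨v, hv, hvq⟩, hqU⟩
  have hΦ : π (v⁻¹ • q) = π p₀ := by rw [hπ, ← hvq, inv_smul_smul]
  have hq : v • (v⁻¹ • q) ∈ U := by rwa [smul_inv_smul]
  simpa using interior_subset hv.2 (v⁻¹ • q) hΦ hq

end Fibre

section SubMulActionProd

variable {G Y Z : Type*} [Group G] [TopologicalSpace G] [ContinuousMul G] [PolishSpace G]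
  [TopologicalSpace Y] [PolishSpace Y] [MulAction G Y] [ContinuousSMul G Y]
  [TopologicalSpace Z] [MulAction G Z] [ContinuousSMul G Z]
  {S : SubMulAction G (Y × Z)} [PolishSpace S]

theorem SubMulAction.isMeagre_section_notMem_orbit (q : S) (hq : orbit G q ∈ residual S)
    (hy : orbit G (q : Y × Z).1 ∈ residual Y) :
    IsMeagre {z : {z : Z // ((q : Y × Z).1, z) ∈ S} |
      ((q : Y × Z).1, (z : Z)) ∉ orbit G (q : Y × Z)} := by
  set y := (q : Y × Z).1
  let e : {z : Z // (y, z) ∈ S} ≃ₜ {p : S // (p : Y × Z).1 = y} :=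
    { toFun z := ⟨⟨(y, z), z.2⟩, rfl⟩
      invFun p := ⟨(p : Y × Z).2, (Prod.ext p.2 rfl : (p : Y × Z) = (y, (p : Y × Z).2)) ▸ p.1.2⟩
      left_inv _ := rfl
      right_inv p := Subtype.ext (Subtype.ext (Prod.ext p.2.symm rfl))
      continuous_toFun := by fun_prop
      continuous_invFun := by fun_prop }
  refine (IsMeagre.preimage_of_isOpenMap e.continuous e.isOpenMap
    (isMeagre_fibre_notMem_orbit (π := fun p : S => (p : Y × Z).1) (by fun_prop)
      (fun _ _ => rfl) hq hy)).mono ?_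
  intro z hz hzq
  exact hz (SubMulAction.mem_orbit_subMul_iff.1 hzq)

end SubMulActionProd

/-- Kuratowski–Ulam type theorem for invariant closed subsets of products:
if `X ⊆ Y × Z` is closed and diagonally invariant, with a point whose orbit is comeagre
in `X` and whose first coordinate has comeagre orbit in `Y`, then for comeagrely many
`y` and comeagrely many `z` in the section `X_y`, the orbit of `(y,z)` is comeagre in `X`. -/
theorem stmt_6 (G Y Z : Type*) [Group G] [TopologicalSpace G] [IsTopologicalGroup G]
    [PolishSpace G] [TopologicalSpace Y] [PolishSpace Y] [TopologicalSpace Z]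
    [PolishSpace Z] [MulAction G Y] [MulAction G Z]
    (hcY : Continuous fun p : G × Y => p.1 • p.2)
    (hcZ : Continuous fun p : G × Z => p.1 • p.2)
    (X : Set (Y × Z)) (hX : IsClosed X)
    (hinv : ∀ g : G, ∀ p ∈ X, ((g • p.1, g • p.2) : Y × Z) ∈ X)
    (y₀ : Y) (z₀ : Z) (h₀ : (y₀, z₀) ∈ X)
    (horb : IsMeagre {p : X | ¬ ∃ g : G, ((g • y₀, g • z₀) : Y × Z) = (p : Y × Z)})
    (horbY : IsMeagre {y : Y | ¬ ∃ g : G, g • y₀ = y}) :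
    {y : Y | IsMeagre {z : {z : Z // (y, z) ∈ X} |
        ¬ IsMeagre {p : X | ¬ ∃ g : G, ((g • y, g • (z : Z)) : Y × Z) = (p : Y × Z)}}}
      ∈ residual Y := by
  have : ContinuousSMul G Y := ⟨hcY⟩
  have : ContinuousSMul G Z := ⟨hcZ⟩
  let S : SubMulAction G (Y × Z) := ⟨X, fun g {p} hp => hinv g p hp⟩
  have : PolishSpace S := hX.polishSpace
  let p₀ : S := ⟨(y₀, z₀), h₀⟩
  have hp₀ : orbit G p₀ ∈ residual S := by
    have hcompl : (orbit G p₀)ᶜ = {p : S | (p : Y × Z) ∉ orbit G (y₀, z₀)} := by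
      ext p
      rw [mem_compl_iff, SubMulAction.mem_orbit_subMul_iff]
      rfl
    rw [← compl_compl (orbit G p₀), hcompl]
    exact horb
  have hy₀ : orbit G y₀ ∈ residual Y := by rw [← compl_compl (orbit G y₀)]; exact horbY
  filter_upwards [hy₀] with _ ⟨g, hg⟩
  subst hg
  refine (SubMulAction.isMeagre_section_notMem_orbit (g • p₀) (by rwa [orbit_smul])
    (by rwa [SubMulAction.val_smul, Prod.smul_fst, orbit_smul])).mono ?_
  intro z hz hzO
  have hO : orbit G (((g • p₀ : S) : Y × Z).1, (z : Z)) = orbit G (y₀, z₀) :=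
    (orbit_eq_iff.2 hzO).trans (by rw [SubMulAction.val_smul, orbit_smul])
  change ¬IsMeagre {p : X | (p : Y × Z) ∉ orbit G (((g • p₀ : S) : Y × Z).1, (z : Z))} at hz
  exact hz (hO ▸ horb)
end

section
/- Let G be a Polish group and suppose the space of commuting (n+1)-tuples in G has a generic element (comeagre diagonal conjugacy orbit) and, for a fixed generic commuting n-tuple (g₁,…,g_n), comeagrely many h in the centralizer C(g₁,…,g_n) are such that (g₁,…,g_n,h) is generic among commuting (n+1)-tuples. Then any two such h, f are conjugate by an element of C(g₁,…,g_n); hence C(g₁,…,g_n) has a comeagre conjugacy class. -/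
/-!
Two generic `(n+1)`-tuples are conjugate, because their comeagre orbits meet in the Polish
(hence Baire) space of commuting tuples; a `k` conjugating `(g₁,…,g_n,h)` to `(g₁,…,g_n,f)`
centralizes every `g_i` and conjugates `h` to `f`. So all `h` in the comeagre set of the
hypothesis lie in one conjugacy class of the centralizer `C(g₁,…,g_n)`, which is then comeagre
in `C(g₁,…,g_n)`.
-/

def CommTuples (G : Type*) [Group G] (n : ℕ) : Set (Fin n → G) :=
  {t | ∀ i j, Commute (t i) (t j)}

def IsGenericTuple (G : Type*) [Group G] [TopologicalSpace G] (n : ℕ)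
    (t : Fin n → G) : Prop :=
  t ∈ CommTuples G n ∧
    IsMeagre {s : CommTuples G n | ¬ ∃ k : G, ∀ i, k * t i * k⁻¹ = (s : Fin n → G) i}

section Topology

variable {G : Type*} [Group G] [TopologicalSpace G]

theorem isClosed_commTuples [ContinuousMul G] [T2Space G] (n : ℕ) :
    IsClosed (CommTuples G n) := by
  have : CommTuples G n = ⋂ i, ⋂ j, {t : Fin n → G | t i * t j = t j * t i} := by
    ext t
    simp [CommTuples, Commute, SemiconjBy]
  rw [this]
  exact isClosed_iInter fun i => isClosed_iInter fun j =>
    isClosed_eq (by fun_prop) (by fun_prop)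

instance [IsTopologicalGroup G] [PolishSpace G] (n : ℕ) : PolishSpace (CommTuples G n) :=
  (isClosed_commTuples n).polishSpace

instance [IsTopologicalGroup G] [PolishSpace G] (s : Set G) :
    PolishSpace (Subgroup.centralizer s) :=
  (Set.isClosed_centralizer s).polishSpace

end Topology

theorem mem_residual_iff_isMeagre_compl {X : Type*} [TopologicalSpace X] {p : X → Prop} :
    {x | p x} ∈ residual X ↔ IsMeagre {x | ¬ p x} := by
  simp only [IsMeagre, Set.compl_ofPred, not_not]

theorem IsGenericTuple.exists_conj {G : Type*} [Group G] [TopologicalSpace G]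
    [IsTopologicalGroup G] [PolishSpace G] {n : ℕ} {t t' : Fin n → G}
    (ht : IsGenericTuple G n t) (ht' : IsGenericTuple G n t') :
    ∃ k : G, ∀ i, k * t i * k⁻¹ = t' i := by
  have : Nonempty (CommTuples G n) := ⟨⟨t, ht.1⟩⟩
  obtain ⟨s, ⟨k, hk⟩, ⟨k', hk'⟩⟩ := (dense_of_mem_residual (Filter.inter_mem
    (mem_residual_iff_isMeagre_compl.2 ht.2) (mem_residual_iff_isMeagre_compl.2 ht'.2))).nonempty
  refine ⟨k'⁻¹ * k, fun i => ?_⟩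
  calc k'⁻¹ * k * t i * (k'⁻¹ * k)⁻¹ = k'⁻¹ * (k * t i * k⁻¹) * k' := by group
    _ = k'⁻¹ * (k' * t' i * k'⁻¹) * k' := by rw [hk i, hk' i]
    _ = t' i := by group

theorem commute_and_conj_of_conj_snoc {G : Type*} [Group G] {n : ℕ} {g : Fin n → G}
    {h f k : G}
    (hk : ∀ i, k * (Fin.snoc g h : Fin (n + 1) → G) i * k⁻¹ =
      (Fin.snoc g f : Fin (n + 1) → G) i) :
    (∀ i, Commute k (g i)) ∧ k * h * k⁻¹ = f := by
  refine ⟨fun i => ?_, by simpa using hk (Fin.last n)⟩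
  have := hk i.castSucc
  rwa [Fin.snoc_castSucc, Fin.snoc_castSucc, mul_inv_eq_iff_eq_mul] at this

theorem exists_isMeagre_not_conj_of_mem_residual {H : Type*} [Group H] [TopologicalSpace H]
    [BaireSpace H] {S : Set H} (hS : S ∈ residual H)
    (hconj : ∀ c ∈ S, ∀ x ∈ S, ∃ k, k * c * k⁻¹ = x) :
    ∃ c : H, IsMeagre {x : H | ¬ ∃ k, k * c * k⁻¹ = x} := by
  obtain ⟨c, hc⟩ := (dense_of_mem_residual hS).nonempty
  exact ⟨c, mem_residual_iff_isMeagre_compl.1 (Filter.mem_of_superset hS (hconj c hc))⟩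

theorem stmt_18_general (G : Type*) [Group G] [TopologicalSpace G] [IsTopologicalGroup G]
    [PolishSpace G] (n : ℕ) (g : Fin n → G)
    (hmany : IsMeagre {h : Subgroup.centralizer (Set.range g) |
        ¬ IsGenericTuple G (n + 1) (Fin.snoc g (h : G))}) :
    (∀ h f : G, (∀ i, Commute h (g i)) → (∀ i, Commute f (g i)) →
        IsGenericTuple G (n + 1) (Fin.snoc g h) →
        IsGenericTuple G (n + 1) (Fin.snoc g f) →
        ∃ k : G, (∀ i, Commute k (g i)) ∧ k * h * k⁻¹ = f) ∧
    ∃ c : Subgroup.centralizer (Set.range g),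
      IsMeagre {x : Subgroup.centralizer (Set.range g) |
        ¬ ∃ k : Subgroup.centralizer (Set.range g), k * c * k⁻¹ = x} := by
  have conj_of_generic : ∀ h f : G, IsGenericTuple G (n + 1) (Fin.snoc g h) →
      IsGenericTuple G (n + 1) (Fin.snoc g f) →
      ∃ k : G, (∀ i, Commute k (g i)) ∧ k * h * k⁻¹ = f := fun h f hh hf =>
    (hh.exists_conj hf).imp fun _ => commute_and_conj_of_conj_snoc
  refine ⟨fun h f _ _ => conj_of_generic h f, ?_⟩
  refine exists_isMeagre_not_conj_of_mem_residual (mem_residual_iff_isMeagre_compl.2 hmany) ?_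
  intro c hc x hx
  obtain ⟨k, hkg, hk⟩ := conj_of_generic c x hc hx
  have hk_mem : k ∈ Subgroup.centralizer (Set.range g) :=
    Subgroup.mem_centralizer_iff.2 <| Set.forall_mem_range.2 fun i => (hkg i).symm
  exact ⟨⟨k, hk_mem⟩, Subtype.ext hk⟩

/-- If `(g₁,…,g_n)` is a generic commuting `n`-tuple in a Polish group `G` and
comeagrely many `h` in the centralizer `C(g₁,…,g_n)` make `(g₁,…,g_n,h)` a generic
commuting `(n+1)`-tuple, then any two such `h, f` are conjugate by an element of the
centralizer; hence the centralizer has a comeagre conjugacy class. -/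
theorem stmt_18 (G : Type*) [Group G] [TopologicalSpace G] [IsTopologicalGroup G]
    [PolishSpace G] (n : ℕ) (g : Fin n → G)
    (hgen : IsGenericTuple G n g)
    (hmany : IsMeagre {h : Subgroup.centralizer (Set.range g) |
        ¬ IsGenericTuple G (n + 1) (Fin.snoc g (h : G))}) :
    (∀ h f : G, (∀ i, Commute h (g i)) → (∀ i, Commute f (g i)) →
        IsGenericTuple G (n + 1) (Fin.snoc g h) →
        IsGenericTuple G (n + 1) (Fin.snoc g f) →
        ∃ k : G, (∀ i, Commute k (g i)) ∧ k * h * k⁻¹ = f) ∧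
    ∃ c : Subgroup.centralizer (Set.range g),
      IsMeagre {x : Subgroup.centralizer (Set.range g) |
        ¬ ∃ k : Subgroup.centralizer (Set.range g), k * c * k⁻¹ = x} :=
  stmt_18_general G n g hmany
end
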